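/- arXiv:2601.00032 — 2 statements merged into one kernel-verified Lean document; each statement's English description precedes it below -/
import Mathlib

section
/- If the commutation relations δq̇ᵢ = d/dt(δqᵢ) hold for all i and the Četaev condition δ⁽ᶜ⁾g = 0 holds identically in t, then δ⁽ᵛ⁾g = −Σᵢ 𝒟ᵢg · δqᵢ. -/
/-!
Along the curve, `pV g i` is a directional derivative of the `C²` function `g`, evaluated at
the `C¹` point `(q, q̇, t)`, so it is `C¹` in `t`. Differentiating the Četaev identity
`Σᵢ pV g i · δqᵢ = 0` then gives `Σᵢ pV g i · (δqᵢ)' = -Σᵢ (d/dt pV g i) · δqᵢ`, and by the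
commutation relations the left side is `Σᵢ pV g i · δq̇ᵢ`. Substituting this into `δ⁽ᵛ⁾g`
gives the claim.
-/

open Function

/-- Partial derivative of `F(q, q̇, t)` with respect to the position coordinate `qᵢ`. -/
noncomputable def pQ {n : ℕ} (F : (Fin n → ℝ) → (Fin n → ℝ) → ℝ → ℝ) (i : Fin n)
    (a v : Fin n → ℝ) (t : ℝ) : ℝ :=
  deriv (fun z => F (Function.update a i z) v t) (a i)

/-- Partial derivative of `F(q, q̇, t)` with respect to the velocity coordinate `q̇ᵢ`. -/
noncomputable def pV {n : ℕ} (F : (Fin n → ℝ) → (Fin n → ℝ) → ℝ → ℝ) (i : Fin n)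
    (a v : Fin n → ℝ) (t : ℝ) : ℝ :=
  deriv (fun z => F a (Function.update v i z) t) (v i)

/-- The velocity of a curve `q : ℝ → ℝⁿ`. -/
noncomputable def vel {n : ℕ} (q : ℝ → Fin n → ℝ) (t : ℝ) : Fin n → ℝ :=
  fun i => deriv (fun s => q s i) t

theorem contDiff_vel {n : ℕ} {k : WithTop ℕ∞} {q : ℝ → Fin n → ℝ} (hq : ContDiff ℝ (k + 1) q) :
    ContDiff ℝ k (vel q) :=
  contDiff_pi.mpr fun i => (contDiff_succ_iff_deriv.mp (contDiff_pi.mp hq i)).2.2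

theorem pV_eq_fderiv {n : ℕ} {g : (Fin n → ℝ) → (Fin n → ℝ) → ℝ → ℝ} {a v : Fin n → ℝ} {s : ℝ}
    (hg : DifferentiableAt ℝ (fun p : ((Fin n → ℝ) × (Fin n → ℝ)) × ℝ => g p.1.1 p.1.2 p.2)
      ((a, v), s)) (i : Fin n) :
    pV g i a v s = fderiv ℝ (fun p : ((Fin n → ℝ) × (Fin n → ℝ)) × ℝ => g p.1.1 p.1.2 p.2)
      ((a, v), s) ((0, Pi.single i 1), 0) := by
  have hline : HasDerivAt (fun z => ((a, update v i z), s)) ((0, Pi.single i 1), 0) (v i) :=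
    ((hasDerivAt_const _ a).prodMk (hasDerivAt_update v i (v i))).prodMk (hasDerivAt_const _ s)
  exact (hg.hasFDerivAt.comp_hasDerivAt_of_eq (v i) hline (by simp)).deriv

theorem contDiff_pV_along {n : ℕ} {k : WithTop ℕ∞} {g : (Fin n → ℝ) → (Fin n → ℝ) → ℝ → ℝ}
    (hg : ContDiff ℝ (k + 1) (fun p : ((Fin n → ℝ) × (Fin n → ℝ)) × ℝ => g p.1.1 p.1.2 p.2))
    {q : ℝ → Fin n → ℝ} (hq : ContDiff ℝ (k + 1) q) (i : Fin n) :
    ContDiff ℝ k fun s => pV g i (q s) (vel q s) s := by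
  have hcurve : ContDiff ℝ k fun s => ((q s, vel q s), s) :=
    ((hq.of_le le_self_add).prodMk (contDiff_vel hq)).prodMk contDiff_id
  have hdiff := hg.differentiable (by simp)
  simp_rw [pV_eq_fderiv (hdiff _)]
  exact ((hg.fderiv_right le_rfl).comp hcurve).clm_apply contDiff_const

theorem sum_mul_deriv_eq_neg_of_sum_mul_eq_zero {ι : Type*} {s : Finset ι} {f h : ι → ℝ → ℝ}
    {t : ℝ} (hf : ∀ i ∈ s, DifferentiableAt ℝ (f i) t) (hh : ∀ i ∈ s, DifferentiableAt ℝ (h i) t)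
    (hzero : ∀ x, ∑ i ∈ s, f i x * h i x = 0) :
    ∑ i ∈ s, f i t * deriv (h i) t = -∑ i ∈ s, deriv (f i) t * h i t := by
  have hsum : HasDerivAt (fun x => ∑ i ∈ s, f i x * h i x)
      (∑ i ∈ s, (deriv (f i) t * h i t + f i t * deriv (h i) t)) t :=
    HasDerivAt.fun_sum fun i hi => (hf i hi).hasDerivAt.mul (hh i hi).hasDerivAt
  have hderiv_zero : ∑ i ∈ s, (deriv (f i) t * h i t + f i t * deriv (h i) t) = 0 := by
    simpa [hzero] using hsum.deriv.symm
  rw [Finset.sum_add_distrib] at hderiv_zero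
  linarith

/-- Under commutation (C₀) and the Četaev condition (A), one has
`δ⁽ᵛ⁾g = −Σᵢ 𝒟ᵢg · δqᵢ`. -/
theorem cetaev_commutation_total_variation {n : ℕ}
    (g : (Fin n → ℝ) → (Fin n → ℝ) → ℝ → ℝ)
    (hg : ContDiff ℝ 2 (fun p : ((Fin n → ℝ) × (Fin n → ℝ)) × ℝ => g p.1.1 p.1.2 p.2))
    (q : ℝ → Fin n → ℝ) (hq : ContDiff ℝ 2 q)
    (δq δq' : ℝ → Fin n → ℝ)
    (hδq : ∀ i, ContDiff ℝ 1 fun s => δq s i)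
    -- commutation relations (C₀): δq̇ᵢ = d/dt(δqᵢ)
    (hcomm : ∀ s i, δq' s i = deriv (fun u => δq u i) s)
    -- Četaev condition (A): δ⁽ᶜ⁾g = 0 identically in t
    (hA : ∀ s, ∑ i, pV g i (q s) (vel q s) s * δq s i = 0)
    (t : ℝ) :
    (∑ i, pQ g i (q t) (vel q t) t * δq t i) + ∑ i, pV g i (q t) (vel q t) t * δq' t i
      = -∑ i, (deriv (fun s => pV g i (q s) (vel q s) s) t - pQ g i (q t) (vel q t) t)
          * δq t i := by
  have hpV : ∀ i, DifferentiableAt ℝ (fun s => pV g i (q s) (vel q s) s) t := fun i =>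
    (contDiff_pV_along (k := 1) hg hq i).differentiable one_ne_zero t
  have hcetaev := sum_mul_deriv_eq_neg_of_sum_mul_eq_zero (fun i _ => hpV i)
    (fun i _ => (hδq i).differentiable one_ne_zero t) hA
  simp only [hcomm t, hcetaev, sub_mul, Finset.sum_sub_distrib]
  ring
end

section
/- Under the integrating-factor hypothesis φg = df/dt, on the constraint manifold (i.e. at times where g(q(t), q̇(t), t) = 0) one has φ·𝒟ⱼg = −φ̇·∂g/∂q̇ⱼ; consequently, if the virtual displacement δq satisfies the Četaev condition Σⱼ (∂g/∂q̇ⱼ) δqⱼ = 0 and φ ≠ 0, then Σⱼ 𝒟ⱼg δqⱼ = 0. -/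
open Function

/-!
Differentiating `φ g = ∇f · q̇ + ∂ₜf` in `q̇ⱼ` gives `φ ∂g/∂q̇ⱼ = ∂f/∂qⱼ` everywhere, so along the
curve `d/dt (φ ∂g/∂q̇ⱼ) = Σₖ ∂²f/∂qₖ∂qⱼ q̇ₖ + ∂²f/∂t∂qⱼ`. Differentiating the same identity in
`qⱼ` at a point where `g = 0` gives `φ ∂g/∂qⱼ = Σₖ ∂²f/∂qⱼ∂qₖ q̇ₖ + ∂²f/∂qⱼ∂t`. The two right-hand
sides agree by symmetry of the second derivative of `f`, and subtracting yields
`φ 𝒟ⱼg = -φ̇ ∂g/∂q̇ⱼ`. Where `φ ≠ 0`, `g = (∇f · q̇ + ∂ₜf) / φ` is differentiable, so the product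
rule applies to `φ g`.
-/

open Topology

section Calculus

variable {𝕜 E F ι : Type*} [NontriviallyNormedField 𝕜]
  [NormedAddCommGroup E] [NormedSpace 𝕜 E] [NormedAddCommGroup F] [NormedSpace 𝕜 F]

theorem HasFDerivAt.hasDerivAt_update_fst [DecidableEq ι] [Fintype ι] {G : (ι → 𝕜) × E → F}
    {G' : (ι → 𝕜) × E →L[𝕜] F} {a : ι → 𝕜} {b : E} (hG : HasFDerivAt G G' (a, b)) (j : ι) :
    HasDerivAt (fun z => G (update a j z, b)) (G' (Pi.single j 1, 0)) (a j) := by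
  have hline := (hasDerivAt_update a j (a j)).prodMk (hasDerivAt_const (a j) b)
  exact (update_eq_self j a ▸ hG).comp_hasDerivAt (a j) hline

theorem HasFDerivAt.hasDerivAt_comp_graph {G : E × 𝕜 → F} {G' : E × 𝕜 →L[𝕜] F} {q : 𝕜 → E}
    {q' : E} {t : 𝕜} (hG : HasFDerivAt G G' (q t, t)) (hq : HasDerivAt q q' t) :
    HasDerivAt (fun s => G (q s, s)) (G' (q', 1)) t :=
  hG.comp_hasDerivAt (f := fun s => (q s, s)) t (hq.prodMk (hasDerivAt_id t))

theorem ContDiffAt.hasFDerivAt_fderiv_apply {G : E → F} {x : E} (hG : ContDiffAt 𝕜 2 G x)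
    (w : E) : HasFDerivAt (fun y => fderiv 𝕜 G y w) ((fderiv 𝕜 (fderiv 𝕜 G) x).flip w) x := by
  have hG' := ((hG.fderiv_right (m := 1) le_rfl).differentiableAt one_ne_zero).hasFDerivAt
  simpa using hG'.clm_apply (hasFDerivAt_const w x)

theorem add_mul_deriv_eq_of_mul_eventuallyEq {c u k : 𝕜 → 𝕜} {c' k' x : 𝕜}
    (hc : HasDerivAt c c' x) (hk : HasDerivAt k k' x) (hcx : c x ≠ 0)
    (heq : (fun y => c y * u y) =ᶠ[𝓝 x] k) : c' * u x + c x * deriv u x = k' := by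
  have hquot : u =ᶠ[𝓝 x] fun y => k y / c y := by
    filter_upwards [heq, hc.continuousAt.eventually_ne hcx] with y hy hcy
    rw [← hy, mul_div_cancel_left₀ _ hcy]
  have hu : DifferentiableAt 𝕜 u x :=
    (hk.div hc hcx).differentiableAt.congr_of_eventuallyEq hquot
  exact ((hc.mul hu.hasDerivAt).congr_of_eventuallyEq heq.symm).unique hk

end Calculus

theorem ContinuousLinearMap.apply_prod_eq_sum {𝕜 ι M : Type*} [Semiring 𝕜] [TopologicalSpace 𝕜]
    [Fintype ι] [DecidableEq ι] [AddCommMonoid M] [TopologicalSpace M] [Module 𝕜 M]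
    (L : (ι → 𝕜) × 𝕜 →L[𝕜] M) (v : ι → 𝕜) (s : 𝕜) :
    L (v, s) = ∑ j, v j • L (Pi.single j 1, 0) + s • L (0, 1) := by
  have hvs : (v, s) = ∑ j, v j • ((Pi.single j 1 : ι → 𝕜), (0 : 𝕜)) + s • (0, 1) := by
    ext <;> simp [Prod.fst_sum, Prod.snd_sum, ← pi_eq_sum_univ']
  rw [hvs, map_add, map_sum]
  simp only [map_smul]

theorem sum_deriv_update_mul_add_deriv_eq_fderiv {ι : Type*} [Fintype ι] [DecidableEq ι]
    {f : (ι → ℝ) → ℝ → ℝ} {a : ι → ℝ} {t : ℝ}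
    (hf : DifferentiableAt ℝ (fun p : (ι → ℝ) × ℝ => f p.1 p.2) (a, t)) (v : ι → ℝ) :
    (∑ j, deriv (fun z => f (update a j z) t) (a j) * v j) + deriv (fun s => f a s) t
      = fderiv ℝ (fun p : (ι → ℝ) × ℝ => f p.1 p.2) (a, t) (v, 1) := by
  have htime := hf.hasFDerivAt.hasDerivAt_comp_graph (q := fun _ => a) (hasDerivAt_const t a)
  rw [ContinuousLinearMap.apply_prod_eq_sum, htime.deriv]
  simp only [smul_eq_mul, one_mul, mul_comm (v _)]
  congr 1
  exact Finset.sum_congr rfl fun j _ => by rw [(hf.hasFDerivAt.hasDerivAt_update_fst j).deriv]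

theorem vel_eq_deriv {n : ℕ} {q : ℝ → Fin n → ℝ} {t : ℝ} (hq : DifferentiableAt ℝ q t) :
    vel q t = deriv q t :=
  (deriv_pi fun i => (differentiableAt_apply i _).comp t hq).symm

section IntegratingFactor

variable {n : ℕ} {φ : (Fin n → ℝ) → ℝ → ℝ} {g : (Fin n → ℝ) → (Fin n → ℝ) → ℝ → ℝ}
  {F : (Fin n → ℝ) × ℝ → ℝ}

theorem mul_pV_eq_of_forall_mul_eq {a : Fin n → ℝ} {t : ℝ} {L : (Fin n → ℝ) × ℝ →L[ℝ] ℝ}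
    (hfac : ∀ v, φ a t * g a v t = L (v, 1)) (j : Fin n) (v : Fin n → ℝ) :
    φ a t * pV g j a v t = L (Pi.single j 1, 0) := by
  rw [pV, ← deriv_const_mul_field, funext fun z => hfac (update v j z)]
  exact (L.hasFDerivAt.hasDerivAt_update_fst j).deriv

theorem deriv_mul_pV_add_mul_deriv_pV
    (hfac : ∀ a v s, φ a s * g a v s = fderiv ℝ F (a, s) (v, 1))
    {q w : ℝ → Fin n → ℝ} {v : Fin n → ℝ} {t : ℝ} (hF : ContDiffAt ℝ 2 F (q t, t))
    (hφ : DifferentiableAt ℝ (fun p : (Fin n → ℝ) × ℝ => φ p.1 p.2) (q t, t))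
    (hq : HasDerivAt q v t) (hφ0 : φ (q t) t ≠ 0) (j : Fin n) :
    deriv (fun s => φ (q s) s) t * pV g j (q t) (w t) t
        + φ (q t) t * deriv (fun s => pV g j (q s) (w s) s) t
      = fderiv ℝ (fderiv ℝ F) (q t, t) (v, 1) (Pi.single j 1, 0) := by
  have hφt := hφ.hasFDerivAt.hasDerivAt_comp_graph hq
  rw [hφt.deriv]
  exact add_mul_deriv_eq_of_mul_eventuallyEq hφt
    ((hF.hasFDerivAt_fderiv_apply _).hasDerivAt_comp_graph hq) hφ0
    (.of_eq <| funext fun s => mul_pV_eq_of_forall_mul_eq (fun v => hfac (q s) v s) j (w s))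

theorem mul_pQ_eq_of_eq_zero (hfac : ∀ a v s, φ a s * g a v s = fderiv ℝ F (a, s) (v, 1))
    {a v : Fin n → ℝ} {t : ℝ} (hF : ContDiffAt ℝ 2 F (a, t))
    (hφ : DifferentiableAt ℝ (fun p : (Fin n → ℝ) × ℝ => φ p.1 p.2) (a, t))
    (hg : g a v t = 0) (hφ0 : φ a t ≠ 0) (j : Fin n) :
    φ a t * pQ g j a v t = fderiv ℝ (fderiv ℝ F) (a, t) (Pi.single j 1, 0) (v, 1) := by
  have hprod := add_mul_deriv_eq_of_mul_eventuallyEq (hφ.hasFDerivAt.hasDerivAt_update_fst j)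
    ((hF.hasFDerivAt_fderiv_apply (v, 1)).hasDerivAt_update_fst j) (by rwa [update_eq_self])
    (.of_eq <| funext fun z => hfac (update a j z) v t)
  simpa only [pQ, update_eq_self, hg, mul_zero, zero_add, ContinuousLinearMap.flip_apply]
    using hprod

end IntegratingFactor

theorem sum_mul_eq_zero_of_forall_mul_eq {ι K : Type*} [Fintype ι] [Field K] {c d : K}
    {A B δ : ι → K} (hc : c ≠ 0) (hAB : ∀ j, c * A j = d * B j) (hB : ∑ j, B j * δ j = 0) :
    ∑ j, A j * δ j = 0 := by
  have hsum : c * ∑ j, A j * δ j = d * ∑ j, B j * δ j := by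
    simp only [Finset.mul_sum, ← mul_assoc, hAB]
  rwa [hB, mul_zero, mul_eq_zero, or_iff_right hc] at hsum

theorem integrating_factor_on_constraint_manifold_general {n : ℕ}
    (φ : (Fin n → ℝ) → ℝ → ℝ)
    (hφ : ContDiff ℝ 1 (fun p : (Fin n → ℝ) × ℝ => φ p.1 p.2))
    (f : (Fin n → ℝ) → ℝ → ℝ)
    (hf : ContDiff ℝ 2 (fun p : (Fin n → ℝ) × ℝ => f p.1 p.2))
    (g : (Fin n → ℝ) → (Fin n → ℝ) → ℝ → ℝ)
    (hfac : ∀ a v t, φ a t * g a v t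
      = (∑ j, deriv (fun z => f (Function.update a j z) t) (a j) * v j)
        + deriv (fun s => f a s) t)
    (q : ℝ → Fin n → ℝ) (hq : ContDiff ℝ 2 q)
    (t : ℝ) (hconstr : g (q t) (vel q t) t = 0) (hφ0 : φ (q t) t ≠ 0) :
    (∀ j : Fin n,
      φ (q t) t * (deriv (fun s => pV g j (q s) (vel q s) s) t - pQ g j (q t) (vel q t) t)
        = -(deriv (fun s => φ (q s) s) t) * pV g j (q t) (vel q t) t)
    ∧ (∀ δq : Fin n → ℝ, (∑ j, pV g j (q t) (vel q t) t * δq j = 0) →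
        ∑ j, (deriv (fun s => pV g j (q s) (vel q s) s) t - pQ g j (q t) (vel q t) t)
          * δq j = 0) := by
  have hF : ContDiffAt ℝ 2 (fun p : (Fin n → ℝ) × ℝ => f p.1 p.2) (q t, t) := hf.contDiffAt
  have hφx := hφ.differentiable one_ne_zero (q t, t)
  have hfac' (a v s) :
      φ a s * g a v s = fderiv ℝ (fun p : (Fin n → ℝ) × ℝ => f p.1 p.2) (a, s) (v, 1) :=
    (hfac a v s).trans <|
      sum_deriv_update_mul_add_deriv_eq_fderiv (hf.differentiable two_ne_zero _) v
  have hqt : HasDerivAt q (vel q t) t := by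
    have hqd := hq.differentiable two_ne_zero t
    exact vel_eq_deriv hqd ▸ hqd.hasDerivAt
  have hmain (j : Fin n) : φ (q t) t * (deriv (fun s => pV g j (q s) (vel q s) s) t
      - pQ g j (q t) (vel q t) t) = -(deriv (fun s => φ (q s) s) t) * pV g j (q t) (vel q t) t := by
    have htime := deriv_mul_pV_add_mul_deriv_pV hfac' (w := vel q) hF hφx hqt hφ0 j
    have hpos := mul_pQ_eq_of_eq_zero hfac' hF hφx hconstr hφ0 j
    rw [hF.isSymmSndFDerivAt (by simp)] at hpos
    linear_combination htime - hpos
  exact ⟨hmain, fun δq => sum_mul_eq_zero_of_forall_mul_eq hφ0 hmain⟩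

/-- Integrating factor on the constraint manifold: at a time where
`g(q(t), q̇(t), t) = 0` one has `φ·𝒟ⱼg = −φ̇·∂g/∂q̇ⱼ`; consequently, if `δq` satisfies
the Četaev condition and `φ ≠ 0`, then `Σⱼ 𝒟ⱼg δqⱼ = 0`. -/
theorem integrating_factor_on_constraint_manifold {n : ℕ}
    (φ : (Fin n → ℝ) → ℝ → ℝ)
    (hφ : ContDiff ℝ 1 (fun p : (Fin n → ℝ) × ℝ => φ p.1 p.2))
    (f : (Fin n → ℝ) → ℝ → ℝ)
    (hf : ContDiff ℝ 2 (fun p : (Fin n → ℝ) × ℝ => f p.1 p.2))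
    (g : (Fin n → ℝ) → (Fin n → ℝ) → ℝ → ℝ)
    (hg : ContDiff ℝ 2 (fun p : ((Fin n → ℝ) × (Fin n → ℝ)) × ℝ => g p.1.1 p.1.2 p.2))
    (hfac : ∀ a v t, φ a t * g a v t
      = (∑ j, deriv (fun z => f (Function.update a j z) t) (a j) * v j)
        + deriv (fun s => f a s) t)
    (q : ℝ → Fin n → ℝ) (hq : ContDiff ℝ 2 q)
    (t : ℝ) (hconstr : g (q t) (vel q t) t = 0) (hφ0 : φ (q t) t ≠ 0) :
    (∀ j : Fin n,
      φ (q t) t * (deriv (fun s => pV g j (q s) (vel q s) s) t - pQ g j (q t) (vel q t) t)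
        = -(deriv (fun s => φ (q s) s) t) * pV g j (q t) (vel q t) t)
    ∧ (∀ δq : Fin n → ℝ, (∑ j, pV g j (q t) (vel q t) t * δq j = 0) →
        ∑ j, (deriv (fun s => pV g j (q s) (vel q s) s) t - pQ g j (q t) (vel q t) t)
          * δq j = 0) :=
  integrating_factor_on_constraint_manifold_general φ hφ f hf g hfac q hq t hconstr hφ0
end
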